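/- With the words ξ⁻_{n,k} as above and letters ξ_{n,k,m}⁻, for every k ≥ 0 and every real x > 1, Σ_{m=1}^{2^k} (ξ_{n,k,m}⁻ − (1 − ξ_{n,k,m}⁻)) x^{−m} < 0. Equivalently, Σ_{m=1}^{2^k} (2ξ_{n,k,m}⁻ − 1) x^{−m} < 0, and it satisfies the recursion S_{k+1}(x) = (1 − x^{−2^k}) S_k(x) with S_0(x) = −x^{−1}. -/

import Mathlib

/-- The prefix `ξ⁻_{n,k}|_{2^k}`. -/
def xiPrefix : ℕ → List Bool
  | 0 => [false]
  | k + 1 => xiPrefix k ++ (xiPrefix k).map not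

def boolSign (b : Bool) : ℝ := 2 * (if b then 1 else 0) - 1

lemma boolSign_not (b : Bool) : boolSign (!b) = -boolSign b := by
  cases b <;> norm_num [boolSign]

/-- The paper's `S_k(x)` is `signedSum (xiPrefix k) x`. -/
noncomputable def signedSum (w : List Bool) (x : ℝ) : ℝ :=
  ∑ m ∈ Finset.range w.length, boolSign (w.getD m false) / x ^ (m + 1)

-- The second half of the sum is the first half shifted by `|w|` places and negated.
lemma signedSum_append_map_not (w : List Bool) (x : ℝ) :
    signedSum (w ++ w.map not) x = (1 - (x ^ w.length)⁻¹) * signedSum w x := by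
  have h_left : ∀ m ∈ Finset.range w.length,
      boolSign ((w ++ w.map not).getD m false) / x ^ (m + 1) =
        boolSign (w.getD m false) / x ^ (m + 1) := fun m hm => by
    rw [List.getD_append _ _ _ _ (Finset.mem_range.mp hm)]
  have h_right : ∀ m ∈ Finset.range w.length,
      boolSign ((w ++ w.map not).getD (w.length + m) false) / x ^ (w.length + m + 1) =
        -((x ^ w.length)⁻¹ * (boolSign (w.getD m false) / x ^ (m + 1))) := fun m hm => by
    have hm : m < w.length := Finset.mem_range.mp hm
    rw [List.getD_append_right _ _ _ _ (by omega), Nat.add_sub_cancel_left,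
      List.getD_eq_getElem _ _ (by simpa using hm), List.getElem_map,
      ← List.getD_eq_getElem _ false hm, boolSign_not, add_assoc, pow_add]
    ring
  rw [signedSum, List.length_append, List.length_map, Finset.sum_range_add,
    Finset.sum_congr rfl h_left, Finset.sum_congr rfl h_right, Finset.sum_neg_distrib,
    ← Finset.mul_sum, signedSum]
  ring

lemma xiPrefix_length (k : ℕ) : (xiPrefix k).length = 2 ^ k := by
  induction k with
  | zero => rfl
  | succ k ih => rw [xiPrefix, List.length_append, List.length_map, ih, pow_succ, mul_two]

lemma signedSum_xiPrefix_zero (x : ℝ) : signedSum (xiPrefix 0) x = -x⁻¹ := by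
  simp [signedSum, xiPrefix, boolSign, neg_div]

lemma signedSum_xiPrefix_succ (k : ℕ) (x : ℝ) :
    signedSum (xiPrefix (k + 1)) x = (1 - (x ^ 2 ^ k)⁻¹) * signedSum (xiPrefix k) x := by
  rw [xiPrefix, signedSum_append_map_not, xiPrefix_length]

lemma signedSum_xiPrefix_neg (k : ℕ) {x : ℝ} (hx : 1 < x) : signedSum (xiPrefix k) x < 0 := by
  induction k with
  | zero => simpa [signedSum_xiPrefix_zero] using zero_lt_one.trans hx
  | succ k ih =>
    have h_factor : 0 < 1 - (x ^ 2 ^ k)⁻¹ :=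
      sub_pos.mpr (inv_lt_one_of_one_lt₀ (one_lt_pow₀ hx (by positivity)))
    rw [signedSum_xiPrefix_succ]
    exact mul_neg_of_pos_of_neg h_factor ih

theorem xi_prefix_sum_neg_general (k : ℕ) (x : ℝ) (hx : 1 < x) :
    (∑ m ∈ Finset.range (2 ^ k),
        (2 * (if (xiPrefix k).getD m false then (1:ℝ) else 0) - 1) / x ^ (m + 1)) < 0 ∧
    (∑ m ∈ Finset.range (2 ^ 0),
        (2 * (if (xiPrefix 0).getD m false then (1:ℝ) else 0) - 1) / x ^ (m + 1)) = -x⁻¹ ∧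
    (∑ m ∈ Finset.range (2 ^ (k + 1)),
        (2 * (if (xiPrefix (k + 1)).getD m false then (1:ℝ) else 0) - 1) / x ^ (m + 1)) =
      (1 - (x ^ 2 ^ k)⁻¹) *
        ∑ m ∈ Finset.range (2 ^ k),
          (2 * (if (xiPrefix k).getD m false then (1:ℝ) else 0) - 1) / x ^ (m + 1) := by
  have h_sum (j : ℕ) : ∑ m ∈ Finset.range (2 ^ j),
      (2 * (if (xiPrefix j).getD m false then (1:ℝ) else 0) - 1) / x ^ (m + 1) =
        signedSum (xiPrefix j) x := by
    rw [signedSum, xiPrefix_length]; rfl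
  rw [h_sum, h_sum, h_sum]
  exact ⟨signedSum_xiPrefix_neg k hx, signedSum_xiPrefix_zero x, signedSum_xiPrefix_succ k x⟩

theorem xi_prefix_sum_neg (n k : ℕ) (hn : 2 ≤ n) (x : ℝ) (hx : 1 < x) :
    (∑ m ∈ Finset.range (2 ^ k),
        (2 * (if (xiPrefix k).getD m false then (1:ℝ) else 0) - 1) / x ^ (m + 1)) < 0 ∧
    (∑ m ∈ Finset.range (2 ^ 0),
        (2 * (if (xiPrefix 0).getD m false then (1:ℝ) else 0) - 1) / x ^ (m + 1)) = -x⁻¹ ∧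
    (∑ m ∈ Finset.range (2 ^ (k + 1)),
        (2 * (if (xiPrefix (k + 1)).getD m false then (1:ℝ) else 0) - 1) / x ^ (m + 1)) =
      (1 - (x ^ 2 ^ k)⁻¹) *
        ∑ m ∈ Finset.range (2 ^ k),
          (2 * (if (xiPrefix k).getD m false then (1:ℝ) else 0) - 1) / x ^ (m + 1) :=
  xi_prefix_sum_neg_general k x hx
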